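/- arXiv:math/0105232 — 7 statements merged into one kernel-verified Lean document; each statement's English description precedes it below -/
import Mathlib

section
/- Let d be a squarefree integer with d ≠ 1, let s ∈ ℂ satisfy s² = d, and let x, y ∈ ℚ with y ≠ 0 be such that both α = x + y·s and its conjugate σα = x − y·s are algebraic integers, and |α| ≤ 2√2 and |σα| ≤ 2√2. Then: if d ≡ 1 (mod 4) one has |d| ≤ 31, and otherwise one has |d| ≤ 7. -/
lemma rat_int_of_integral (q : ℚ) (h : IsIntegral ℤ ((q:ℂ))) : ∃ k : ℤ, (k:ℚ) = q := by
  have h1 : IsIntegral ℤ q := by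
    rw [show ((q:ℂ)) = algebraMap ℚ ℂ q by simp] at h
    exact (isIntegral_algebraMap_iff (algebraMap ℚ ℂ).injective).mp h
  exact IsIntegrallyClosed.isIntegral_iff.mp h1

lemma int_of_sqfree_mul_sq (d k : ℤ) (hd : Squarefree d) (b : ℚ)
    (h : (k:ℚ) = d * b^2) : ∃ c : ℤ, (c:ℚ) = b := by
  have hb : (b.num : ℚ) = b * b.den := by
    exact_mod_cast (Rat.mul_den_eq_num b).symm
  have hZ : k * (b.den:ℤ)^2 = d * b.num^2 := by
    have : (k:ℚ) * (b.den:ℚ)^2 = (d:ℚ) * (b.num:ℚ)^2 := by rw [hb, h]; ring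
    exact_mod_cast this
  have hdvd : ((b.den:ℤ))^2 ∣ d * b.num^2 := ⟨k, by linarith⟩
  have hcop : IsCoprime ((b.den:ℤ)) b.num := by
    rw [Int.isCoprime_iff_gcd_eq_one, Int.gcd_comm]
    exact b.reduced
  have hdd : ((b.den:ℤ))^2 ∣ d :=
    (hcop.pow (m := 2) (n := 2)).dvd_of_dvd_mul_right (by simpa [mul_comm d] using hdvd)
  have hu : IsUnit ((b.den:ℤ)) := hd _ (by rw [← sq]; exact hdd)
  have hden : b.den = 1 := by
    rcases Int.isUnit_iff.mp hu with h1 | h1 <;> omega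
  exact ⟨b.num, by rw [← Rat.num_div_den b, hden]; simp⟩

theorem quadratic_discriminant_bound_n0_two
    (d : ℤ) (hd : Squarefree d) (hd1 : d ≠ 1)
    (s : ℂ) (hs : s ^ 2 = (d : ℂ))
    (x y : ℚ) (hy : y ≠ 0)
    (hint : IsIntegral ℤ ((x : ℂ) + (y : ℂ) * s))
    (hint' : IsIntegral ℤ ((x : ℂ) - (y : ℂ) * s))
    (habs : ‖(x : ℂ) + (y : ℂ) * s‖ ≤ 2 * Real.sqrt 2)
    (habs' : ‖(x : ℂ) - (y : ℂ) * s‖ ≤ 2 * Real.sqrt 2) :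
    (d % 4 = 1 → |d| ≤ 31) ∧ (d % 4 ≠ 1 → |d| ≤ 7) := by
  set α := (x : ℂ) + (y : ℂ) * s with hα
  set β := (x : ℂ) - (y : ℂ) * s with hβ
  -- trace is an integer
  obtain ⟨a, ha⟩ : ∃ a : ℤ, (a:ℚ) = 2*x := by
    apply rat_int_of_integral
    have h := hint.add hint'
    convert h using 1
    · rfl
    push_cast; ring
  -- norm is an integer
  obtain ⟨n, hn⟩ : ∃ n : ℤ, (n:ℚ) = x^2 - d*y^2 := by
    apply rat_int_of_integral
    have h := hint.mul hint'
    convert h using 1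
    · rfl
    push_cast
    linear_combination (y:ℂ)^2 * hs
  -- key algebraic identity
  have hkey : ((a^2 - 4*n : ℤ):ℚ) = (d:ℚ) * (2*y)^2 := by
    push_cast
    linear_combination ((a:ℚ) + 2*x) * ha - 4*hn
  obtain ⟨b, hb⟩ := int_of_sqfree_mul_sq d (a^2 - 4*n) hd (2*y) hkey
  have hbne : b ≠ 0 := by
    intro h; apply hy
    have : ((0:ℤ):ℚ) = 2*y := by rw [← h]; exact hb
    simpa using this.symm
  have hZeq : d * b^2 = a^2 - 4*n := by
    have : (d:ℚ) * ((b:ℚ))^2 = ((a^2 - 4*n : ℤ):ℚ) := by rw [hb, hkey]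
    exact_mod_cast this
  -- analytic bound: b^2 * |d| ≤ 32
  have hbC : ((b:ℤ):ℂ) = 2*(y:ℂ) := by
    have := congrArg (Rat.cast : ℚ → ℂ) hb
    push_cast at this ⊢
    exact this
  have h1 : ‖(b:ℂ) * s‖ ≤ 4 * Real.sqrt 2 := by
    have hid : ((b:ℤ):ℂ) * s = α - β := by rw [hbC, hα, hβ]; ring
    rw [hid]
    calc ‖α - β‖ ≤ ‖α‖ + ‖β‖ := by
          exact norm_sub_le α β
      _ ≤ 4 * Real.sqrt 2 := by linarith
  have hsq : ‖s‖ ^ 2 = |(d:ℝ)| := by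
    rw [← norm_pow, hs]
    exact_mod_cast Complex.norm_intCast d
  have h2 : (‖(b:ℂ) * s‖)^2 = (b:ℝ)^2 * |(d:ℝ)| := by
    rw [norm_mul, mul_pow, hsq, Complex.norm_intCast, ← Int.cast_abs]
    norm_cast
    rw [sq_abs]
  have h3 : (b:ℝ)^2 * |(d:ℝ)| ≤ 32 := by
    rw [← h2]
    have h4 : (‖(b:ℂ) * s‖)^2 ≤ (4 * Real.sqrt 2)^2 := by
      apply pow_le_pow_left₀ (by positivity) h1
    have : (4 * Real.sqrt 2)^2 = 32 := by
      rw [mul_pow, Real.sq_sqrt (by norm_num : (2:ℝ) ≥ 0)]; norm_num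
    linarith
  have hb1 : (1:ℝ) ≤ (b:ℝ)^2 := by
    have h := Int.one_le_abs hbne
    have : (1:ℤ) ≤ b^2 := by nlinarith [sq_abs b]
    exact_mod_cast this
  have hd32 : |d| ≤ 32 := by
    have hr : |(d:ℝ)| ≤ 32 := by nlinarith [abs_nonneg (d:ℝ)]
    have : ((|d|:ℤ):ℝ) ≤ 32 := by rw [Int.cast_abs]; exact hr
    exact_mod_cast this
  have h4d : ¬ (4 ∣ d) := by
    intro hdvd
    have : IsUnit (2:ℤ) := hd 2 (by omega)
    simp [Int.isUnit_iff] at this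
  constructor
  · intro h4
    rcases abs_cases d with ⟨he, _⟩ | ⟨he, _⟩ <;> omega
  · intro h4
    -- b must be even
    rcases Int.even_or_odd b with ⟨c, hc⟩ | ⟨c, hc⟩
    · -- b = 2c, c ≠ 0, so b^2 ≥ 4 and |d| ≤ 8
      have hcne : c ≠ 0 := by intro h; apply hbne; omega
      have hc1 : (1:ℤ) ≤ c^2 := by
        have := Int.one_le_abs hcne
        nlinarith [sq_abs c]
      have hb4 : (4:ℝ) ≤ (b:ℝ)^2 := by
        have : (4:ℤ) ≤ b^2 := by rw [hc]; nlinarith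
        exact_mod_cast this
      have hd8 : |d| ≤ 8 := by
        have hr : |(d:ℝ)| ≤ 8 := by nlinarith [abs_nonneg (d:ℝ)]
        have : ((|d|:ℤ):ℝ) ≤ 8 := by rw [Int.cast_abs]; exact hr
        exact_mod_cast this
      rcases abs_cases d with ⟨he, _⟩ | ⟨he, _⟩ <;> omega
    · -- b odd: contradiction
      exfalso
      subst hc
      rcases Int.even_or_odd a with ⟨e, he⟩ | ⟨e, he⟩
      · subst he
        exact h4d ⟨e^2 - n - d*c^2 - d*c, by linear_combination hZeq⟩
      · subst he
        have : d = 4*(e^2 + e - n - d*c^2 - d*c) + 1 := by linear_combination hZeq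
        omega
end

section
/- Let d be a squarefree integer with d ≠ 1, let s ∈ ℂ satisfy s² = d, and let x, y ∈ ℚ with y ≠ 0 be such that both α = x + y·s and its conjugate σα = x − y·s are algebraic integers, and |α| ≤ 2√3 and |σα| ≤ 2√3. Then: if d ≡ 1 (mod 4) one has |d| ≤ 47, and otherwise one has |d| ≤ 11. -/
private lemma rat_int_of_isIntegral (q : ℚ) (h : IsIntegral ℤ ((q:ℂ))) :
    ∃ n : ℤ, (n:ℚ) = q := by
  have h2 : IsIntegral ℤ q := by
    rwa [show ((q:ℂ)) = algebraMap ℚ ℂ q from rfl,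
      isIntegral_algebraMap_iff (algebraMap ℚ ℂ).injective] at h
  exact IsIntegrallyClosed.isIntegral_iff.mp h2

theorem quadratic_discriminant_bound_n0_three
    (d : ℤ) (hd : Squarefree d) (hd1 : d ≠ 1)
    (s : ℂ) (hs : s ^ 2 = (d : ℂ))
    (x y : ℚ) (hy : y ≠ 0)
    (hint : IsIntegral ℤ ((x : ℂ) + (y : ℂ) * s))
    (hint' : IsIntegral ℤ ((x : ℂ) - (y : ℂ) * s))
    (habs : ‖(x : ℂ) + (y : ℂ) * s‖ ≤ 2 * Real.sqrt 3)
    (habs' : ‖(x : ℂ) - (y : ℂ) * s‖ ≤ 2 * Real.sqrt 3) :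
    (d % 4 = 1 → |d| ≤ 47) ∧ (d % 4 ≠ 1 → |d| ≤ 11) := by
  -- the trace 2x is an integer
  obtain ⟨a, ha⟩ : ∃ n : ℤ, (n:ℚ) = 2*x := by
    apply rat_int_of_isIntegral
    have : (((2*x : ℚ)):ℂ) = ((x : ℂ) + (y : ℂ) * s) + ((x : ℂ) - (y : ℂ) * s) := by
      push_cast; ring
    rw [this]; exact hint.add hint'
  -- the norm x² - y²d is an integer
  obtain ⟨n, hn⟩ : ∃ n : ℤ, (n:ℚ) = x^2 - y^2*d := by
    apply rat_int_of_isIntegral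
    have : (((x^2 - y^2*d : ℚ)):ℂ) = ((x : ℂ) + (y : ℂ) * s) * ((x : ℂ) - (y : ℂ) * s) := by
      push_cast; rw [← hs]; ring
    rw [this]; exact hint.mul hint'
  -- (2y)² d is an integer
  obtain ⟨m, hm⟩ : ∃ m : ℤ, (m:ℚ) = (2*y)^2*d := by
    apply rat_int_of_isIntegral
    have : (((((2*y)^2*d) : ℚ)):ℂ) =
        (((x : ℂ) + (y : ℂ) * s) - ((x : ℂ) - (y : ℂ) * s))^2 := by
      push_cast; rw [← hs]; ring
    rw [this]; exact (hint.sub hint').pow 2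
  -- 2y is an integer, since d is squarefree
  set t : ℚ := 2*y with ht
  have htne : t ≠ 0 := by simp [ht, hy]
  have hden0 : ((t.den:ℚ)) ≠ 0 := by
    exact_mod_cast t.den_nz
  have h0 : (t.num : ℚ) = t * (t.den:ℚ) := (div_eq_iff hden0).mp (Rat.num_div_den t)
  have hden : (t.den : ℤ) = 1 := by
    have hkey : (t.num)^2 * d = m * (t.den)^2 := by
      have h1 : ((t.num : ℚ))^2 * d = (m:ℚ) * ((t.den:ℚ))^2 := by
        rw [hm, h0]; push_cast; ring
      exact_mod_cast h1
    have hdvd : (((t.den:ℤ))^2) ∣ (t.num)^2 * d := ⟨m, by linarith [hkey]⟩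
    have hcop : IsCoprime (((t.den:ℤ))^2) (((t.num))^2) := by
      apply IsCoprime.pow
      rw [Int.isCoprime_iff_gcd_eq_one, Int.gcd_comm]
      exact t.reduced
    have hdvd2 : ((t.den:ℤ))^2 ∣ d := hcop.dvd_of_dvd_mul_left hdvd
    have := hd (t.den:ℤ) (by rwa [← sq])
    rw [Int.isUnit_iff] at this
    rcases this with h | h
    · exact h
    · exfalso; omega
  obtain ⟨b, hb⟩ : ∃ b : ℤ, (b:ℚ) = 2*y := by
    refine ⟨t.num, ?_⟩
    rw [← ht, h0]
    have : ((t.den:ℚ)) = 1 := by exact_mod_cast hden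
    rw [this, mul_one]
  have hbne : b ≠ 0 := by
    intro h; rw [h] at hb; push_cast at hb
    exact hy (by linarith)
  have hm' : m = b^2 * d := by
    have : (m:ℚ) = ((b:ℚ))^2 * (d:ℚ) := by rw [hm, hb, ht]
    exact_mod_cast this
  -- the key bound b² |d| ≤ 48
  have hbound : b^2 * |d| ≤ 48 := by
    have h4 : ‖(b:ℂ) * s‖ ≤ 4 * Real.sqrt 3 := by
      have hdiff : (b:ℂ) * s = ((x : ℂ) + (y : ℂ) * s) - ((x : ℂ) - (y : ℂ) * s) := by
        have : ((b:ℚ):ℂ) = ((2*y : ℚ) : ℂ) := by rw [hb]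
        push_cast at this
        rw [this]; ring
      rw [hdiff]
      calc ‖((x : ℂ) + (y : ℂ) * s) - ((x : ℂ) - (y : ℂ) * s)‖
          ≤ ‖(x : ℂ) + (y : ℂ) * s‖ + ‖(x : ℂ) - (y : ℂ) * s‖ := norm_sub_le _ _
        _ ≤ 2 * Real.sqrt 3 + 2 * Real.sqrt 3 := by
            apply add_le_add <;> assumption
        _ = 4 * Real.sqrt 3 := by ring
    have hsq : ‖(b:ℂ) * s‖^2 ≤ 48 := by
      have h3 : (0:ℝ) ≤ Real.sqrt 3 := Real.sqrt_nonneg 3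
      have h33 : Real.sqrt 3 ^ 2 = 3 := Real.sq_sqrt (by norm_num)
      calc ‖(b:ℂ) * s‖^2 ≤ (4 * Real.sqrt 3)^2 := by
            apply pow_le_pow_left₀ (norm_nonneg _) h4
        _ = 48 := by rw [mul_pow, h33]; norm_num
    have heq : ‖(b:ℂ) * s‖^2 = ((b^2 * |d| : ℤ) : ℝ) := by
      rw [← norm_pow, mul_pow, hs]
      rw [show ((b:ℂ))^2 * ((d:ℤ):ℂ) = (((b:ℝ)^2 * (d:ℝ) : ℝ) : ℂ) by push_cast; ring]
      rw [Complex.norm_real, Real.norm_eq_abs, abs_mul, abs_of_nonneg (sq_nonneg _)]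
      push_cast
      ring
    rw [heq] at hsq
    exact_mod_cast hsq
  have hb1 : 1 ≤ b^2 := by
    have h0 : 0 < b^2 := by positivity
    linarith [Int.add_one_le_of_lt h0]
  have hd48 : |d| ≤ 48 := by nlinarith [abs_nonneg d]
  have hnd4 : ¬ (4:ℤ) ∣ d := by
    intro h
    have := hd 2 (by rwa [show (2:ℤ)*2 = 4 from rfl])
    rw [Int.isUnit_iff] at this; omega
  constructor
  · intro h1
    have := abs_le.mp hd48
    rw [abs_le]; omega
  · intro h1
    -- b must be even
    have hbeven : 2 ∣ b := by
      by_contra hodd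
      obtain ⟨q, hq⟩ : ∃ q, b = 2*q + 1 := ⟨b/2, by omega⟩
      -- 4 ∣ a² - b² d
      have hkey4 : a^2 - b^2*d = 4*n := by
        have : ((a:ℚ))^2 - ((b:ℚ))^2*d = 4*(n:ℚ) := by
          rw [ha, hb, hn]; push_cast; ring
        exact_mod_cast this
      have hz : ((a : ZMod 4))^2 = ((b:ZMod 4))^2 * (d : ZMod 4) := by
        have : ((a^2 - b^2*d : ℤ) : ZMod 4) = 0 := by
          rw [ZMod.intCast_zmod_eq_zero_iff_dvd]
          exact ⟨n, hkey4⟩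
        push_cast at this
        linear_combination this
      have hb4 : ((b:ZMod 4))^2 = 1 := by
        have : ((b^2 - 1 : ℤ) : ZMod 4) = 0 := by
          rw [ZMod.intCast_zmod_eq_zero_iff_dvd]
          exact ⟨q^2 + q, by rw [hq]; ring⟩
        push_cast at this
        linear_combination this
      have hdz : (d : ZMod 4) ≠ 0 := by
        rw [Ne, ZMod.intCast_zmod_eq_zero_iff_dvd]
        exact_mod_cast hnd4
      rw [hb4, one_mul] at hz
      have hd1' : (d : ZMod 4) = 1 := by
        have hsqcase : ∀ u : ZMod 4, u^2 = 0 ∨ u^2 = 1 := by decide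
        rcases hsqcase (a : ZMod 4) with h | h
        · exact absurd (hz.symm.trans h) hdz
        · exact hz.symm.trans h
      have hmod : d % 4 = 1 := by
        have h2 : d % 4 = 1 % 4 :=
          (ZMod.intCast_eq_intCast_iff d 1 4).mp (by rw [hd1']; simp)
        omega
      exact h1 hmod
    obtain ⟨c, hc⟩ := hbeven
    have hcne : c ≠ 0 := by rintro rfl; simp at hc; exact hbne hc
    have hc1 : 1 ≤ c^2 := by
      have h0 : 0 < c^2 := by positivity
      linarith [Int.add_one_le_of_lt h0]
    have hb4c : b^2 = 4*c^2 := by rw [hc]; ring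
    have hd12 : |d| ≤ 12 := by nlinarith [abs_nonneg d, hc1, hb4c, hbound]
    have := abs_le.mp hd12
    rw [abs_le]; omega
end

section
/- For all complex numbers α, β and every integer n ≥ 1, one has α^n + β^n = Σ_{i=0}^{⌊n/2⌋} (−1)^i · (n/(n−i)) · C(n−i, i) · (αβ)^i · (α+β)^{n−2i}, where C(n−i, i) denotes the binomial coefficient and n/(n−i) is the rational number n divided by n−i. -/
open Finset

def gwc (n i : ℕ) : ℕ :=
  match i with
  | 0 => 1
  | (j+1) => (n - (j+1)).choose (j+1) + (n - j - 2).choose j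

lemma gwc_rec (m i : ℕ) (h : 2 * i ≤ m) :
    gwc (m+2) (i+1) = gwc (m+1) (i+1) + gwc m i := by
  cases i with
  | zero =>
      simp only [gwc]
      rw [show m + 2 - 1 = m + 1 from by omega, show m + 2 - 0 - 2 = m from by omega,
        show m + 1 - 1 = m from by omega, show m + 1 - 0 - 2 = m - 1 from by omega]
      simp [Nat.choose_one_right]
  | succ j =>
      obtain ⟨a, rfl⟩ : ∃ a, m = a + j + 2 := ⟨m - j - 2, by omega⟩
      simp only [gwc]
      rw [show a + j + 2 + 2 - (j + 1 + 1) = a + 2 from by omega,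
        show a + j + 2 + 2 - (j + 1) - 2 = a + 1 from by omega,
        show a + j + 2 + 1 - (j + 1 + 1) = a + 1 from by omega,
        show a + j + 2 + 1 - (j + 1) - 2 = a from by omega,
        show a + j + 2 - (j + 1) = a + 1 from by omega,
        show a + j + 2 - j - 2 = a from by omega]
      rw [Nat.choose_succ_succ (a+1) (j+1), Nat.choose_succ_succ a j]
      simp only [Nat.succ_eq_add_one]
      omega

lemma gwc_zero (k : ℕ) (hk : 1 ≤ k) : gwc (2*k+1) (k+1) = 0 := by
  simp only [gwc]
  rw [show 2*k+1 - (k+1) = k from by omega, show 2*k+1 - k - 2 = k - 1 from by omega]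
  rw [Nat.choose_eq_zero_of_lt (by omega), Nat.choose_eq_zero_of_lt (by omega)]

lemma gwc_coeff (n i : ℕ) (hn : 1 ≤ n) (hi : 2 * i ≤ n) :
    ((n : ℂ) / ((n : ℂ) - (i : ℂ))) * ((n - i).choose i : ℂ) = (gwc n i : ℂ) := by
  cases i with
  | zero =>
      have hne : (n : ℂ) ≠ 0 := Nat.cast_ne_zero.mpr (by omega)
      simp [gwc, div_self hne]
  | succ j =>
      have hlt : (j+1 : ℕ) < n := by omega
      have hle : (j+1 : ℕ) ≤ n := le_of_lt hlt
      have hcast : (n : ℂ) - ((j+1 : ℕ) : ℂ) = ((n - (j+1) : ℕ) : ℂ) := by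
        rw [Nat.cast_sub hle]
      have hne : (n : ℂ) - ((j+1 : ℕ) : ℂ) ≠ 0 := by
        rw [hcast]
        exact Nat.cast_ne_zero.mpr (by omega)
      rw [div_mul_eq_mul_div, div_eq_iff hne, hcast]
      have natid : n * ((n - (j+1)).choose (j+1)) = gwc n (j+1) * (n - (j+1)) := by
        obtain ⟨b, rfl⟩ : ∃ b, n = b + 1 + (j+1) := ⟨n - j - 2, by omega⟩
        rw [show b + 1 + (j+1) - (j+1) = b + 1 from by omega]
        simp only [gwc]
        rw [show b + 1 + (j+1) - (j+1) = b + 1 from by omega,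
          show b + 1 + (j+1) - j - 2 = b from by omega]
        have key := Nat.add_one_mul_choose_eq b j
        set c1 := (b+1).choose (j+1)
        set c0 := b.choose j
        calc (b + 1 + (j+1)) * c1 = c1 * (b+1) + c1 * (j+1) := by ring
          _ = c1 * (b+1) + (b+1) * c0 := by rw [← key]
          _ = (c1 + c0) * (b+1) := by ring
      exact_mod_cast natid

noncomputable def gwT (α β : ℂ) (n i : ℕ) : ℂ :=
  (-1:ℂ)^i * (gwc n i : ℂ) * (α*β)^i * (α+β)^(n - 2*i)

lemma gwT_rec (α β : ℂ) (m i : ℕ) (hm : 1 ≤ m) (hi : 2 * i ≤ m) :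
    gwT α β (m+2) (i+1) = (α+β) * gwT α β (m+1) (i+1) - (α*β) * gwT α β m i := by
  rcases lt_or_eq_of_le hi with hlt | heq
  · -- 2*i < m
    obtain ⟨k, rfl⟩ : ∃ k, m = 2*i + k + 1 := ⟨m - 2*i - 1, by omega⟩
    simp only [gwT]
    rw [show 2*i + k + 1 + 2 - 2*(i+1) = k + 1 from by omega,
      show 2*i + k + 1 + 1 - 2*(i+1) = k from by omega,
      show 2*i + k + 1 - 2*i = k + 1 from by omega]
    have hrec := gwc_rec (2*i + k + 1) i (by omega)
    push_cast [hrec]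
    ring
  · -- m = 2*i
    obtain rfl : m = 2*i := heq.symm
    have hi1 : 1 ≤ i := by omega
    simp only [gwT]
    rw [show 2*i + 2 - 2*(i+1) = 0 from by omega,
      show 2*i - 2*i = 0 from by omega]
    have h0 : gwc (2*i+1) (i+1) = 0 := gwc_zero i hi1
    have hrec := gwc_rec (2*i) i (by omega)
    rw [h0, zero_add] at hrec
    rw [h0, hrec]
    push_cast
    ring

lemma gwc_sum (α β : ℂ) (n : ℕ) (hn : 1 ≤ n) :
    α ^ n + β ^ n = ∑ i ∈ Finset.range (n / 2 + 1), gwT α β n i := by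
  have base1 : α ^ 1 + β ^ 1 = ∑ i ∈ Finset.range (1 / 2 + 1), gwT α β 1 i := by
    simp [gwT, gwc]
  have base2 : α ^ 2 + β ^ 2 = ∑ i ∈ Finset.range (2 / 2 + 1), gwT α β 2 i := by
    rw [show (2:ℕ)/2 + 1 = 2 from rfl, Finset.sum_range_succ, Finset.sum_range_one]
    simp only [gwT, gwc]
    norm_num
    ring
  have step : ∀ m : ℕ, 1 ≤ m →
      (α ^ m + β ^ m = ∑ i ∈ Finset.range (m / 2 + 1), gwT α β m i) →
      (α ^ (m+1) + β ^ (m+1) = ∑ i ∈ Finset.range ((m+1) / 2 + 1), gwT α β (m+1) i) →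
      α ^ (m+2) + β ^ (m+2) = ∑ i ∈ Finset.range ((m+2) / 2 + 1), gwT α β (m+2) i := by
    intro m hm ih1 ih2
    have hdiv : (m+2)/2 + 1 = (m/2 + 1) + 1 := by omega
    rw [hdiv, Finset.sum_range_succ']
    -- goal: α^(m+2)+β^(m+2) = ∑ i in range (m/2+1), gwT (m+2) (i+1) + gwT (m+2) 0
    have point : ∀ i ∈ Finset.range (m/2 + 1),
        gwT α β (m+2) (i+1) = (α+β) * gwT α β (m+1) (i+1) - (α*β) * gwT α β m i := by
      intro i hi
      exact gwT_rec α β m i hm (by simp at hi; omega)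
    rw [Finset.sum_congr rfl point, Finset.sum_sub_distrib, ← Finset.mul_sum, ← Finset.mul_sum]
    -- relate ∑ i in range (m/2+1), gwT (m+1) (i+1) to the (m+1)-sum
    have hshift : ∑ i ∈ Finset.range ((m+1)/2 + 1), gwT α β (m+1) i
        = ∑ i ∈ Finset.range (m/2 + 1), gwT α β (m+1) (i+1) + gwT α β (m+1) 0 := by
      rcases Nat.even_or_odd m with ⟨t, rfl⟩ | ⟨t, rfl⟩
      · -- m even: (m+1)/2 = m/2, extra zero term
        set m := t + t with hmdef
        have h1 : (m+1)/2 + 1 = m/2 + 1 := by omega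
        rw [h1, Finset.sum_range_succ']
        have hz : gwT α β (m+1) (m/2 + 1) = 0 := by
          have : gwc (m+1) (m/2+1) = 0 := by
            have := gwc_zero (m/2) (by omega)
            rwa [show 2*(m/2)+1 = m+1 from by omega] at this
          simp [gwT, this]
        rw [show m/2 + 1 = (m/2) + 1 from rfl, Finset.sum_range_succ, hz, add_zero]
      · set m := 2*t + 1 with hmdef
        have h1 : (m+1)/2 + 1 = (m/2 + 1) + 1 := by omega
        rw [h1, Finset.sum_range_succ']
    have h0 : gwT α β (m+2) 0 = (α+β) * gwT α β (m+1) 0 := by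
      simp only [gwT, gwc]
      rw [show (m+2) - 2*0 = (m+1) + 1 from by omega, show (m+1) - 2*0 = m+1 from by omega]
      ring
    rw [h0]
    have expand : α ^ (m+2) + β ^ (m+2) = (α+β)*(α^(m+1)+β^(m+1)) - (α*β)*(α^m+β^m) := by
      ring
    rw [expand, ih1, ih2, hshift]
    ring
  -- two-step induction
  have key : ∀ k : ℕ, (α ^ (k+1) + β ^ (k+1) = ∑ i ∈ Finset.range ((k+1) / 2 + 1), gwT α β (k+1) i)
      ∧ (α ^ (k+2) + β ^ (k+2) = ∑ i ∈ Finset.range ((k+2) / 2 + 1), gwT α β (k+2) i) := by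
    intro k
    induction k with
    | zero => exact ⟨base1, base2⟩
    | succ j ih => exact ⟨ih.2, step (j+1) (by omega) ih.1 ih.2⟩
  obtain ⟨m, rfl⟩ : ∃ m, n = m + 1 := ⟨n - 1, by omega⟩
  exact (key m).1

theorem girard_waring_power_sum (α β : ℂ) (n : ℕ) (hn : 1 ≤ n) :
    α ^ n + β ^ n =
      ∑ i ∈ Finset.range (n / 2 + 1),
        (-1 : ℂ) ^ i * ((n : ℂ) / ((n : ℂ) - (i : ℂ))) * ((n - i).choose i : ℂ) *
          (α * β) ^ i * (α + β) ^ (n - 2 * i) := by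
  rw [gwc_sum α β n hn]
  refine Finset.sum_congr rfl fun i hi => ?_
  have h2i : 2 * i ≤ n := by
    simp only [Finset.mem_range] at hi
    omega
  rw [gwT, ← gwc_coeff n i hn h2i]
  ring
end

section
/- Let p be a prime number, n ≥ 1 an integer, and u ∈ ℂ with u^n = 1. Let α, β ∈ ℂ be algebraic integers with α·β = p·u, and set a = α + β. Assume a ≠ 0, that a^n is a rational integer, and that a²·u^{-1} is a rational integer. Then α^n + β^n is a rational integer. -/
theorem power_sum_is_rational_integer
    (p : ℕ) (hp : Nat.Prime p) (n : ℕ) (hn : 1 ≤ n)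
    (u : ℂ) (hu : u ^ n = 1)
    (α β : ℂ) (hα : IsIntegral ℤ α) (hβ : IsIntegral ℤ β)
    (hαβ : α * β = (p : ℂ) * u)
    (a : ℂ) (ha : a = α + β) (ha0 : a ≠ 0)
    (han : ∃ k : ℤ, a ^ n = (k : ℂ))
    (ha2 : ∃ m : ℤ, a ^ 2 * u⁻¹ = (m : ℂ)) :
    ∃ N : ℤ, α ^ n + β ^ n = (N : ℂ) := by
  have hu0 : u ≠ 0 := by
    intro h
    rw [h, zero_pow (by omega)] at hu
    exact zero_ne_one hu
  obtain ⟨k, hk⟩ := han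
  obtain ⟨m, hm⟩ := ha2
  have hm0 : (m : ℂ) ≠ 0 := by
    rw [← hm]
    exact mul_ne_zero (pow_ne_zero _ ha0) (inv_ne_zero hu0)
  have hmq : (m : ℚ) ≠ 0 := by
    intro h
    exact hm0 (by exact_mod_cast (show (m : ℚ) = 0 from h))
  have hu' : u = a ^ 2 / (m : ℂ) := by
    rw [← hm]
    field_simp [hu0]
  have key : ∀ j : ℕ, (∃ q : ℚ, α ^ j + β ^ j = (q : ℂ) * a ^ j) ∧
      (∃ q : ℚ, α ^ (j + 1) + β ^ (j + 1) = (q : ℂ) * a ^ (j + 1)) := by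
    intro j
    induction j with
    | zero => exact ⟨⟨2, by norm_num⟩, ⟨1, by simp [ha]⟩⟩
    | succ j ih =>
      refine ⟨ih.2, ?_⟩
      obtain ⟨q0, h0⟩ := ih.1
      obtain ⟨q1, h1⟩ := ih.2
      refine ⟨q1 - p * q0 / m, ?_⟩
      have hrec : α ^ (j + 1 + 1) + β ^ (j + 1 + 1)
          = (α + β) * (α ^ (j + 1) + β ^ (j + 1)) - (α * β) * (α ^ j + β ^ j) := by
        ring
      rw [hrec, ← ha, hαβ, hu', h0, h1]
      push_cast
      field_simp
      ring
  obtain ⟨q, hq⟩ := (key n).1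
  have hqn : α ^ n + β ^ n = ((q * (k : ℚ) : ℚ) : ℂ) := by
    rw [hq, hk]
    push_cast
    ring
  have hint : IsIntegral ℤ (α ^ n + β ^ n) := (hα.pow n).add (hβ.pow n)
  rw [hqn] at hint
  have hint' : IsIntegral ℤ (q * (k : ℚ)) := by
    rw [show ((q * (k : ℚ) : ℚ) : ℂ) = algebraMap ℚ ℂ (q * (k : ℚ)) from rfl] at hint
    exact (isIntegral_algebraMap_iff (algebraMap ℚ ℂ).injective).mp hint
  obtain ⟨z, hz⟩ := IsIntegrallyClosed.isIntegral_iff.mp hint'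
  refine ⟨z, ?_⟩
  rw [hqn, ← hz]
  simp
end

section
/- Let n₀ ≥ 2 be an integer, let P ∈ ℂ[X] be a polynomial whose degree is 5 or 6, and let x, y be nonzero Laurent series in ℂ((q)) with order(x) = 1 − n₀ and order(y) = 1 − 2n₀, satisfying y² = P(x). Then: if deg P = 6 then n₀ = 2, and if deg P = 5 then n₀ = 3. -/
open Polynomial HahnSeries

lemma term_orderTop (x : LaurentSeries ℂ) (hx : x ≠ 0) {c : ℂ} (hc : c ≠ 0) (d : ℕ) :
    ((algebraMap ℂ (LaurentSeries ℂ) c) * x ^ d).orderTop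
      = (((d : ℤ) * x.order : ℤ) : WithTop ℤ) := by
  have hCc : (algebraMap ℂ (LaurentSeries ℂ) c) = HahnSeries.C c := by
    simp [HahnSeries.algebraMap_apply', ← PowerSeries.C_eq_algebraMap,
      HahnSeries.ofPowerSeries_C]
  have hC : (algebraMap ℂ (LaurentSeries ℂ) c) ≠ 0 := by
    rw [hCc]; exact HahnSeries.C_ne_zero hc
  have hxd : x ^ d ≠ 0 := pow_ne_zero _ hx
  have hne : (algebraMap ℂ (LaurentSeries ℂ) c) * x ^ d ≠ 0 := mul_ne_zero hC hxd
  rw [← order_eq_orderTop_of_ne_zero hne]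
  rw [HahnSeries.order_mul hC hxd]
  have h1 : (algebraMap ℂ (LaurentSeries ℂ) c).order = 0 := by
    rw [hCc]; exact HahnSeries.order_C
  have h2 : (x ^ d).order = d • x.order := HahnSeries.order_pow x d
  rw [h1, h2, zero_add]
  congr 1

lemma aeval_orderTop_eq (x : LaurentSeries ℂ) (hx : x ≠ 0) (hxo : x.order < 0) :
    ∀ (n : ℕ) (P : Polynomial ℂ), P.natDegree ≤ n → P ≠ 0 →
      (Polynomial.aeval x P).orderTop = (((P.natDegree : ℤ) * x.order : ℤ) : WithTop ℤ) := by
  intro n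
  induction n with
  | zero =>
    intro P hPn hP0
    have hd : P.natDegree = 0 := Nat.le_zero.mp hPn
    obtain ⟨a, rfl⟩ := Polynomial.natDegree_eq_zero.mp hd
    have ha : a ≠ 0 := by simpa using hP0
    rw [hd]
    simpa using term_orderTop x hx ha 0
  | succ n ih =>
    intro P hPn hP0
    by_cases hdz : P.natDegree = 0
    · obtain ⟨a, rfl⟩ := Polynomial.natDegree_eq_zero.mp hdz
      have ha : a ≠ 0 := by simpa using hP0
      rw [hdz]
      simpa using term_orderTop x hx ha 0
    have key := Polynomial.eraseLead_add_C_mul_X_pow P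
    have hlc : P.leadingCoeff ≠ 0 := Polynomial.leadingCoeff_ne_zero.mpr hP0
    have ht : (Polynomial.aeval x (Polynomial.C P.leadingCoeff * X ^ P.natDegree)).orderTop
        = (((P.natDegree : ℤ) * x.order : ℤ) : WithTop ℤ) := by
      rw [map_mul, Polynomial.aeval_C, map_pow, Polynomial.aeval_X]
      exact term_orderTop x hx hlc P.natDegree
    by_cases he : P.eraseLead = 0
    · conv_lhs => rw [← key, he, zero_add]
      exact ht
    · have hcard : 2 ≤ P.support.card := by
        have h1 := Polynomial.card_support_eraseLead_add_one hP0
        have h2 : 0 < P.eraseLead.support.card :=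
          Finset.card_pos.mpr (Polynomial.support_nonempty.mpr he)
        omega
      have hlt : P.eraseLead.natDegree < P.natDegree := Polynomial.eraseLead_natDegree_lt hcard
      have hEle : P.eraseLead.natDegree ≤ n := by omega
      have hE := ih P.eraseLead hEle he
      have horder : (Polynomial.aeval x (Polynomial.C P.leadingCoeff * X ^ P.natDegree)).orderTop
          < (Polynomial.aeval x P.eraseLead).orderTop := by
        rw [hE, ht]
        exact_mod_cast mul_lt_mul_of_neg_right (by exact_mod_cast hlt) hxo
      conv_lhs => rw [← key]
      rw [map_add]
      rw [orderTop_add_eq_right horder]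
      exact ht

theorem n0_eq_two_or_three
    (n₀ : ℕ) (hn₀ : 2 ≤ n₀)
    (P : Polynomial ℂ) (hP : P.natDegree = 5 ∨ P.natDegree = 6)
    (x y : LaurentSeries ℂ) (hx : x ≠ 0) (hy : y ≠ 0)
    (hxo : x.order = 1 - (n₀ : ℤ)) (hyo : y.order = 1 - 2 * (n₀ : ℤ))
    (hrel : y ^ 2 = Polynomial.aeval x P) :
    (P.natDegree = 6 → n₀ = 2) ∧ (P.natDegree = 5 → n₀ = 3) := by
  have hxoneg : x.order < 0 := by rw [hxo]; omega
  have hP0 : P ≠ 0 := by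
    intro h
    rcases hP with h5 | h5 <;> rw [h, Polynomial.natDegree_zero] at h5 <;> omega
  have hleft : (y ^ 2).orderTop = ((2 * y.order : ℤ) : WithTop ℤ) := by
    have hy2 : y ^ 2 ≠ 0 := pow_ne_zero _ hy
    rw [← order_eq_orderTop_of_ne_zero hy2, HahnSeries.order_pow]
    congr 1
  have hright := aeval_orderTop_eq x hx hxoneg P.natDegree P le_rfl hP0
  rw [hrel, hright] at hleft
  have hkey : (2 : ℤ) * y.order = (P.natDegree : ℤ) * x.order := by exact_mod_cast hleft.symm
  rw [hxo, hyo] at hkey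
  constructor
  · intro h6; rw [h6] at hkey; push_cast at hkey; omega
  · intro h5; rw [h5] at hkey; push_cast at hkey; omega
end

section
/- Let x, y ∈ ℂ((q)) be Laurent series all of whose coefficients are rational numbers, with x nonzero of negative order, and let P ∈ ℂ[X] be a polynomial such that y² = P(x). Then every coefficient of P is a rational number. -/
open HahnSeries Polynomial

noncomputable def Srat : Subfield ℂ := (algebraMap ℚ ℂ).fieldRange

lemma srat_iff (z : ℂ) : z ∈ Srat ↔ ∃ r : ℚ, z = (r : ℂ) := by
  constructor
  · rintro ⟨r, rfl⟩; exact ⟨r, (eq_ratCast (algebraMap ℚ ℂ) r).symm⟩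
  · rintro ⟨r, rfl⟩; exact ⟨r, eq_ratCast (algebraMap ℚ ℂ) r⟩

lemma rat_mul {f g : LaurentSeries ℂ} (hf : ∀ n, f.coeff n ∈ Srat)
    (hg : ∀ n, g.coeff n ∈ Srat) : ∀ n, (f * g).coeff n ∈ Srat := by
  intro n
  rw [HahnSeries.coeff_mul]
  exact sum_mem (fun ij _ => Subfield.mul_mem _ (hf _) (hg _))

lemma rat_pow {f : LaurentSeries ℂ} (hf : ∀ n, f.coeff n ∈ Srat) (d : ℕ) :
    ∀ n, (f ^ d).coeff n ∈ Srat := by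
  induction d with
  | zero =>
    intro n
    rw [pow_zero, HahnSeries.coeff_one]
    split_ifs
    · exact Subfield.one_mem _
    · exact Subfield.zero_mem _
  | succ d ih =>
    rw [pow_succ]
    exact rat_mul ih hf

lemma alg_single (c : ℂ) : (algebraMap ℂ (LaurentSeries ℂ)) c = HahnSeries.single (0 : ℤ) c := by
  rw [HahnSeries.algebraMap_apply', PowerSeries.algebraMap_apply, Algebra.algebraMap_self,
    RingHom.id_apply, HahnSeries.ofPowerSeries_C, HahnSeries.C_apply]

lemma coeff_sum (s : Finset ℕ) (F : ℕ → LaurentSeries ℂ) (g : ℤ) :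
    (∑ i ∈ s, F i).coeff g = ∑ i ∈ s, (F i).coeff g := by
  induction s using Finset.induction_on with
  | empty => simp
  | insert a s h ih => rw [Finset.sum_insert h, Finset.sum_insert h, HahnSeries.coeff_add, ih]

lemma lc_pow (x : LaurentSeries ℂ) (n : ℕ) :
    (x ^ n).coeff ((x ^ n).order) = (x.coeff x.order) ^ n := by
  induction n with
  | zero => simp
  | succ n ih =>
    rcases eq_or_ne x 0 with rfl | hx
    · simp [zero_pow (Nat.succ_ne_zero n)]
    · rw [pow_succ, HahnSeries.order_mul (pow_ne_zero n hx) hx,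
        HahnSeries.coeff_mul_order_add_order, HahnSeries.leadingCoeff_eq,
        HahnSeries.leadingCoeff_eq, ih, pow_succ]

lemma key (x : LaurentSeries ℂ) (hx : x ≠ 0) (hord : x.order < 0) (P : Polynomial ℂ) :
    (Polynomial.aeval x P).coeff ((P.natDegree : ℤ) * x.order)
      = P.coeff P.natDegree * (x.coeff x.order) ^ P.natDegree := by
  rw [Polynomial.aeval_def, Polynomial.eval₂_eq_sum_range, coeff_sum]
  simp only [alg_single, HahnSeries.single_zero_mul_eq_smul, HahnSeries.coeff_smul, smul_eq_mul]
  rw [Finset.sum_range_succ]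
  have hzero : ∀ i ∈ Finset.range P.natDegree,
      P.coeff i * (x ^ i).coeff ((P.natDegree : ℤ) * x.order) = 0 := by
    intro i hi
    rw [Finset.mem_range] at hi
    have hlt : (P.natDegree : ℤ) * x.order < (x ^ i).order := by
      rw [HahnSeries.order_pow, nsmul_eq_mul]
      exact mul_lt_mul_of_neg_right (by exact_mod_cast hi) hord
    rw [HahnSeries.coeff_eq_zero_of_lt_order hlt, mul_zero]
  rw [Finset.sum_eq_zero hzero, zero_add]
  congr 1
  have : ((P.natDegree : ℤ) * x.order) = (x ^ P.natDegree).order := by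
    rw [HahnSeries.order_pow, nsmul_eq_mul]
  rw [this, lc_pow]

lemma aux (x : LaurentSeries ℂ) (hxrat : ∀ n, x.coeff n ∈ Srat) (hx : x ≠ 0)
    (hord : x.order < 0) :
    ∀ N : ℕ, ∀ P : Polynomial ℂ, P.natDegree ≤ N →
      (∀ n, (Polynomial.aeval x P).coeff n ∈ Srat) → ∀ i, P.coeff i ∈ Srat := by
  have hb : x.coeff x.order ∈ Srat := hxrat _
  have hbne : x.coeff x.order ≠ 0 := by rw [← HahnSeries.leadingCoeff_eq]; exact HahnSeries.leadingCoeff_ne_zero.mpr hx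
  have htop : ∀ P : Polynomial ℂ, (∀ n, (Polynomial.aeval x P).coeff n ∈ Srat) →
      P.coeff P.natDegree ∈ Srat := by
    intro P hP
    have hk := key x hx hord P
    have h1 : P.coeff P.natDegree * (x.coeff x.order) ^ P.natDegree ∈ Srat := by
      rw [← hk]; exact hP _
    have h2 : P.coeff P.natDegree
        = (P.coeff P.natDegree * (x.coeff x.order) ^ P.natDegree)
          / ((x.coeff x.order) ^ P.natDegree) := by
      rw [mul_div_cancel_right₀ _ (pow_ne_zero _ hbne)]
    rw [h2]
    exact Subfield.div_mem _ h1 (Subfield.pow_mem _ hb _)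
  intro N
  induction N with
  | zero =>
    intro P hPdeg hP i
    have hc0 : P.coeff 0 ∈ Srat := by
      have := htop P hP
      rwa [Nat.le_zero.mp hPdeg] at this
    rcases Nat.eq_zero_or_pos i with rfl | hi
    · exact hc0
    · rw [Polynomial.coeff_eq_zero_of_natDegree_lt (lt_of_le_of_lt hPdeg hi)]
      exact Subfield.zero_mem _
  | succ N ih =>
    intro P hPdeg hP i
    by_cases hle : P.natDegree ≤ N
    · exact ih P hle hP i
    · have hd : P.natDegree = N + 1 := le_antisymm hPdeg (Nat.succ_le_of_lt (not_le.mp hle))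
      have hlead : P.coeff P.natDegree ∈ Srat := htop P hP
      by_cases hi : i = P.natDegree
      · rw [hi]; exact hlead
      · -- use eraseLead
        have hQdeg : P.eraseLead.natDegree ≤ N := by
          have := Polynomial.eraseLead_natDegree_le P
          omega
        have hQrat : ∀ n, (Polynomial.aeval x P.eraseLead).coeff n ∈ Srat := by
          intro n
          have hdecomp : P.eraseLead = P - Polynomial.C P.leadingCoeff * X ^ P.natDegree := by
            rw [eq_sub_iff_add_eq, Polynomial.eraseLead_add_C_mul_X_pow]
          rw [hdecomp, map_sub, HahnSeries.coeff_sub]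
          apply Subfield.sub_mem _ (hP n)
          rw [map_mul, Polynomial.aeval_C, map_pow, Polynomial.aeval_X, alg_single,
            HahnSeries.single_zero_mul_eq_smul, HahnSeries.coeff_smul, smul_eq_mul]
          refine Subfield.mul_mem _ ?_ (rat_pow hxrat _ _)
          rw [Polynomial.leadingCoeff]
          exact hlead
        have := ih P.eraseLead hQdeg hQrat i
        rwa [Polynomial.eraseLead_coeff_of_ne i hi] at this

theorem polynomial_rational_of_rational_expansions
    (x y : LaurentSeries ℂ)
    (hxrat : ∀ n : ℤ, ∃ r : ℚ, x.coeff n = (r : ℂ))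
    (hyrat : ∀ n : ℤ, ∃ r : ℚ, y.coeff n = (r : ℂ))
    (hx : x ≠ 0) (hord : x.order < 0)
    (P : Polynomial ℂ) (hrel : y ^ 2 = Polynomial.aeval x P) :
    ∀ i : ℕ, ∃ r : ℚ, P.coeff i = (r : ℂ) := by
  have hx' : ∀ n, x.coeff n ∈ Srat := fun n => (srat_iff _).mpr (hxrat n)
  have hy' : ∀ n, y.coeff n ∈ Srat := fun n => (srat_iff _).mpr (hyrat n)
  have hPx : ∀ n, (Polynomial.aeval x P).coeff n ∈ Srat := by
    intro n
    rw [← hrel, sq]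
    exact rat_mul hy' hy' n
  intro i
  exact (srat_iff _).mp (aux x hx' hx hord P.natDegree P le_rfl hPx i)
end

section
/- The set of tuples (d, a₂, a₃, a₅, a₇, a₁₁, a₁₃) ∈ ℤ × ℂ⁶ satisfying the following conditions is finite: d is a squarefree integer with d ≠ 1; there exists s ∈ ℂ with s² = d such that for each p ∈ {2, 3, 5, 7, 11, 13} there are x_p, y_p ∈ ℚ with a_p = x_p + y_p·s, both a_p and its conjugate x_p − y_p·s are algebraic integers, and |x_p + y_p·s| ≤ 2√p and |x_p − y_p·s| ≤ 2√p; and moreover y₂ ≠ 0 or y₃ ≠ 0. -/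
/-- The condition satisfied by a coefficient `a = x + y·s` of the newform at a prime `p`:
`a` and its conjugate `x − y·s` are algebraic integers of absolute value at most `2√p`. -/
def FourierCoeffCond (s : ℂ) (p : ℕ) (a : ℂ) (x y : ℚ) : Prop :=
  a = (x : ℂ) + (y : ℂ) * s ∧
    IsIntegral ℤ ((x : ℂ) + (y : ℂ) * s) ∧ IsIntegral ℤ ((x : ℂ) - (y : ℂ) * s) ∧
    ‖(x : ℂ) + (y : ℂ) * s‖ ≤ 2 * Real.sqrt p ∧
    ‖(x : ℂ) - (y : ℂ) * s‖ ≤ 2 * Real.sqrt p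

/-- A rational that is integral over ℤ (as a complex number) is an integer. -/
lemma aux_rat_int {q : ℚ} (h : IsIntegral ℤ ((q : ℂ))) : ∃ m : ℤ, (m : ℚ) = q := by
  have h2 : IsIntegral ℤ q := by
    rwa [show ((q : ℂ)) = algebraMap ℚ ℂ q from rfl,
      isIntegral_algebraMap_iff (algebraMap ℚ ℂ).injective] at h
  exact IsIntegrallyClosed.isIntegral_iff.mp h2

/-- If `d` is squarefree and `q² d` is an integer then `q` is an integer. -/
lemma aux_sqfree {d : ℤ} (hd : Squarefree d) {q : ℚ} {n : ℤ} (h : q ^ 2 * (d : ℚ) = n) :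
    ∃ m : ℤ, (m : ℚ) = q := by
  set u : ℤ := q.num
  set v : ℤ := (q.den : ℤ)
  have hvpos : (0 : ℤ) < v := Int.natCast_pos.mpr q.pos
  have hv0 : v ≠ 0 := by omega
  have hq : q = (u : ℚ) / v := (Rat.num_div_den q).symm
  have key : u ^ 2 * d = n * v ^ 2 := by
    have h' : ((u : ℚ) / v) ^ 2 * (d : ℚ) = n := by rw [← hq]; exact h
    field_simp at h'
    rw [mul_comm (n : ℤ)]
    exact_mod_cast h'
  have hcop : IsCoprime v u := by
    rw [Int.isCoprime_iff_gcd_eq_one, Int.gcd_comm]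
    exact q.reduced
  have hdvd : v ^ 2 ∣ u ^ 2 * d := ⟨n, by linarith [key]⟩
  have hdvd2 : v ^ 2 ∣ d := (hcop.pow).dvd_of_dvd_mul_left hdvd
  have hvu : IsUnit v := hd v (by rw [← sq]; exact hdvd2)
  have hv1 : v = 1 := by
    rcases Int.isUnit_iff.mp hvu with h1 | h1
    · exact h1
    · omega
  exact ⟨u, by rw [hq, hv1]; norm_num⟩

/-- Finiteness of square roots in ℂ. -/
lemma aux_roots_finite (c : ℂ) : Set.Finite {s : ℂ | s ^ 2 = c} := by
  obtain ⟨r, hr⟩ := IsAlgClosed.exists_pow_nat_eq c (n := 2) (by norm_num)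
  apply Set.Finite.subset ((Set.finite_singleton (-r)).insert r)
  intro s hs
  have hz : (s - r) * (s + r) = 0 := by
    have hs' : s ^ 2 = c := hs
    linear_combination hs' - hr
  rcases mul_eq_zero.mp hz with h | h
  · exact Set.mem_insert_iff.mpr (Or.inl (sub_eq_zero.mp h))
  · exact Set.mem_insert_iff.mpr (Or.inr (by simp [eq_neg_of_add_eq_zero_left h]))

/-- The finite superset for the coefficients. -/
def CoeffSet : Set ℂ :=
  {z | ∃ d m n : ℤ, |d| ≤ 48 ∧ |m| ≤ 16 ∧ |n| ≤ 16 ∧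
    ∃ s : ℂ, s ^ 2 = (d : ℂ) ∧ z = (m : ℂ) / 2 + (n : ℂ) / 2 * s}

lemma coeffSet_finite : Set.Finite CoeffSet := by
  have hsub : CoeffSet ⊆ ⋃ d ∈ Finset.Icc (-48 : ℤ) 48, ⋃ m ∈ Finset.Icc (-16 : ℤ) 16,
      ⋃ n ∈ Finset.Icc (-16 : ℤ) 16,
      (fun s : ℂ => (m : ℂ) / 2 + (n : ℂ) / 2 * s) '' {s : ℂ | s ^ 2 = (d : ℂ)} := by
    rintro z ⟨d, m, n, hd, hm, hn, s, hs, hz⟩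
    simp only [Set.mem_iUnion, Finset.mem_Icc]
    exact ⟨d, abs_le.mp hd, m, abs_le.mp hm, n, abs_le.mp hn, ⟨s, hs, hz.symm⟩⟩
  apply Set.Finite.subset _ hsub
  apply Set.Finite.biUnion (Finset.finite_toSet _)
  intro d _
  apply Set.Finite.biUnion (Finset.finite_toSet _)
  intro m _
  apply Set.Finite.biUnion (Finset.finite_toSet _)
  intro n _
  exact (aux_roots_finite _).image _

/-- Extracted integer data from a Fourier coefficient condition. -/
lemma coeff_data {d : ℤ} (hd : Squarefree d) {s : ℂ} (hs : s ^ 2 = (d : ℂ)) {p : ℕ}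
    (hp : (p : ℝ) ≤ 16) {a : ℂ} {x y : ℚ} (h : FourierCoeffCond s p a x y) :
    ∃ m n : ℤ, |m| ≤ 16 ∧ |n| ≤ 16 ∧ (m : ℚ) = 2 * x ∧ (n : ℚ) = 2 * y ∧
      (n : ℝ) ^ 2 * |(d : ℝ)| ≤ 16 * p := by
  obtain ⟨ha, hi1, hi2, hb1, hb2⟩ := h
  set α := (x : ℂ) + (y : ℂ) * s with hα
  set β := (x : ℂ) - (y : ℂ) * s with hβ
  -- the sum is 2x
  have hsum : α + β = ((2 * x : ℚ) : ℂ) := by push_cast; ring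
  obtain ⟨m, hm⟩ := aux_rat_int (q := 2 * x) (by rw [← hsum]; exact hi1.add hi2)
  -- the square of the difference is 4 y² d
  have hdiffsq : (α - β) ^ 2 = (((2 * y) ^ 2 * (d : ℚ) : ℚ) : ℂ) := by
    have h1 : α - β = 2 * (y : ℂ) * s := by rw [hα, hβ]; ring
    rw [h1]
    push_cast
    rw [show (2 * (y : ℂ) * s) ^ 2 = 2 ^ 2 * (y : ℂ) ^ 2 * s ^ 2 by ring, hs]
    ring
  obtain ⟨n0, hn0⟩ := aux_rat_int (q := (2 * y) ^ 2 * (d : ℚ))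
    (by rw [← hdiffsq]; exact (hi1.sub hi2).pow 2)
  obtain ⟨n, hn⟩ := aux_sqfree hd (q := 2 * y) (n := n0) hn0.symm
  -- basic real bounds
  have hp0 : (0 : ℝ) ≤ p := Nat.cast_nonneg p
  have hsq : Real.sqrt p ≤ 4 := by
    rw [show (4 : ℝ) = Real.sqrt 16 by
      rw [show (16 : ℝ) = 4 ^ 2 by norm_num, Real.sqrt_sq]; norm_num]
    exact Real.sqrt_le_sqrt hp
  have hsqnn : (0 : ℝ) ≤ Real.sqrt p := Real.sqrt_nonneg _
  -- |s|² = |d|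
  have hd0 : d ≠ 0 := hd.ne_zero
  have hsabs : ‖s‖ ^ 2 = |(d : ℝ)| := by
    rw [← norm_pow, hs]
    rw [show ((d : ℂ)) = ((d : ℝ) : ℂ) by push_cast; ring]
    rw [Complex.norm_real, Real.norm_eq_abs]
  have hdge1 : (1 : ℝ) ≤ |(d : ℝ)| := by
    have : (1 : ℤ) ≤ |d| := Int.one_le_abs (by omega)
    calc (1 : ℝ) ≤ ((|d| : ℤ) : ℝ) := by exact_mod_cast this
    _ = |(d : ℝ)| := by push_cast; ring
  have hsge1 : (1 : ℝ) ≤ ‖s‖ := by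
    nlinarith [norm_nonneg s]
  -- bound on m
  have hmb : |m| ≤ 16 := by
    have h1 : ‖α + β‖ ≤ 4 * Real.sqrt p := by
      calc ‖α + β‖ ≤ ‖α‖ + ‖β‖ := norm_add_le _ _
      _ ≤ 4 * Real.sqrt p := by rw [hα, hβ]; linarith
    have h2 : ‖α + β‖ = |(m : ℝ)| := by
      rw [hsum, ← hm]
      rw [show (((m : ℚ) : ℂ)) = ((m : ℝ) : ℂ) by push_cast; ring]
      rw [Complex.norm_real, Real.norm_eq_abs]
    have : |(m : ℝ)| ≤ 16 := by rw [← h2]; nlinarith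
    exact_mod_cast (by push_cast at this ⊢; exact this : |(m : ℝ)| ≤ (16 : ℝ))
  -- bound on n
  have hdiffabs : ‖α - β‖ = |(n : ℝ)| * ‖s‖ := by
    have h1 : α - β = ((n : ℚ) : ℂ) * s := by
      rw [hα, hβ, hn]; push_cast; ring
    rw [h1, norm_mul]
    congr 1
    rw [show (((n : ℚ) : ℂ)) = ((n : ℝ) : ℂ) by push_cast; ring]
    rw [Complex.norm_real, Real.norm_eq_abs]
  have hnb0 : |(n : ℝ)| * ‖s‖ ≤ 4 * Real.sqrt p := by
    rw [← hdiffabs]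
    calc ‖α - β‖ ≤ ‖α‖ + ‖β‖ := by
          simpa [sub_eq_add_neg] using norm_add_le α (-β)
    _ ≤ 4 * Real.sqrt p := by rw [hα, hβ]; linarith
  have hnb : |n| ≤ 16 := by
    have h2 : |(n : ℝ)| ≤ 16 := by nlinarith [abs_nonneg ((n : ℝ))]
    exact_mod_cast (by push_cast at h2 ⊢; exact h2 : |(n : ℝ)| ≤ (16 : ℝ))
  -- bound n² |d|
  have hnd : (n : ℝ) ^ 2 * |(d : ℝ)| ≤ 16 * p := by
    have h1 : (|(n : ℝ)| * ‖s‖) ^ 2 ≤ (4 * Real.sqrt p) ^ 2 := by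
      apply sq_le_sq'
      · nlinarith [abs_nonneg ((n : ℝ)), norm_nonneg s]
      · exact hnb0
    have h2 : Real.sqrt p ^ 2 = p := Real.sq_sqrt hp0
    nlinarith [sq_abs ((n : ℝ))]
  exact ⟨m, n, hmb, hnb, hm, hn, hnd⟩

theorem finiteness_of_admissible_data :
    Set.Finite {v : ℤ × ℂ × ℂ × ℂ × ℂ × ℂ × ℂ |
      Squarefree v.1 ∧ v.1 ≠ 1 ∧
      ∃ s : ℂ, s ^ 2 = (v.1 : ℂ) ∧
        ∃ x₂ y₂ x₃ y₃ x₅ y₅ x₇ y₇ x₁₁ y₁₁ x₁₃ y₁₃ : ℚ,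
          FourierCoeffCond s 2 v.2.1 x₂ y₂ ∧
          FourierCoeffCond s 3 v.2.2.1 x₃ y₃ ∧
          FourierCoeffCond s 5 v.2.2.2.1 x₅ y₅ ∧
          FourierCoeffCond s 7 v.2.2.2.2.1 x₇ y₇ ∧
          FourierCoeffCond s 11 v.2.2.2.2.2.1 x₁₁ y₁₁ ∧
          FourierCoeffCond s 13 v.2.2.2.2.2.2 x₁₃ y₁₃ ∧
          (y₂ ≠ 0 ∨ y₃ ≠ 0)} := by
  have hfin : Set.Finite ((Set.Icc (-48 : ℤ) 48) ×ˢ CoeffSet ×ˢ CoeffSet ×ˢ CoeffSet ×ˢ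
      CoeffSet ×ˢ CoeffSet ×ˢ CoeffSet) :=
    (Set.finite_Icc _ _).prod (coeffSet_finite.prod (coeffSet_finite.prod
      (coeffSet_finite.prod (coeffSet_finite.prod (coeffSet_finite.prod coeffSet_finite)))))
  apply Set.Finite.subset hfin
  rintro ⟨d, a2, a3, a5, a7, a11, a13⟩
    ⟨hd, -, s, hs, x₂, y₂, x₃, y₃, x₅, y₅, x₇, y₇, x₁₁, y₁₁, x₁₃, y₁₃,
      h2, h3, h5, h7, h11, h13, hy⟩
  obtain ⟨m2, n2, hm2, hn2, hmx2, hny2, hd2⟩ := coeff_data hd hs (by norm_num) h2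
  obtain ⟨m3, n3, hm3, hn3, hmx3, hny3, hd3⟩ := coeff_data hd hs (by norm_num) h3
  obtain ⟨m5, n5, hm5, hn5, hmx5, hny5, hd5⟩ := coeff_data hd hs (by norm_num) h5
  obtain ⟨m7, n7, hm7, hn7, hmx7, hny7, hd7⟩ := coeff_data hd hs (by norm_num) h7
  obtain ⟨m11, n11, hm11, hn11, hmx11, hny11, hd11⟩ := coeff_data hd hs (by norm_num) h11
  obtain ⟨m13, n13, hm13, hn13, hmx13, hny13, hd13⟩ := coeff_data hd hs (by norm_num) h13
  -- bound on d
  have hdb : |d| ≤ 48 := by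
    have key : ∀ (n : ℤ) (p : ℕ), (p : ℝ) ≤ 3 → n ≠ 0 →
        ((n : ℝ)) ^ 2 * |(d : ℝ)| ≤ 16 * p → |d| ≤ 48 := by
      intro n p hp hn0 hnd
      have h1 : (1 : ℝ) ≤ ((n : ℝ)) ^ 2 := by
        have hi : (1 : ℤ) ≤ n ^ 2 := by rcases hn0.lt_or_gt with h | h <;> nlinarith
        have : ((1 : ℤ) : ℝ) ≤ ((n ^ 2 : ℤ) : ℝ) := Int.cast_le.mpr hi
        push_cast at this
        linarith
      have h2 : |(d : ℝ)| ≤ 48 := by nlinarith [abs_nonneg ((d : ℝ))]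
      have : ((|d| : ℤ) : ℝ) ≤ 48 := by push_cast; exact h2
      exact_mod_cast this
    rcases hy with hy | hy
    · apply key n2 2 (by norm_num) _ hd2
      intro h0
      apply hy
      have : (n2 : ℚ) = 0 := by exact_mod_cast h0
      rw [this] at hny2
      linarith [hny2]
    · apply key n3 3 (by norm_num) _ hd3
      intro h0
      apply hy
      have : (n3 : ℚ) = 0 := by exact_mod_cast h0
      rw [this] at hny3
      linarith [hny3]
  have mem_coeff : ∀ (p : ℕ) (a : ℂ) (x y : ℚ) (m n : ℤ), |m| ≤ 16 → |n| ≤ 16 →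
      (m : ℚ) = 2 * x → (n : ℚ) = 2 * y → FourierCoeffCond s p a x y → a ∈ CoeffSet := by
    intro p a x y m n hm hn hmx hny hcond
    refine ⟨d, m, n, hdb, hm, hn, s, hs, ?_⟩
    have hx : (x : ℚ) = (m : ℚ) / 2 := by linarith [hmx]
    have hyq : (y : ℚ) = (n : ℚ) / 2 := by linarith [hny]
    rw [hcond.1, hx, hyq]
    push_cast
    ring
  refine ⟨Set.mem_Icc.mpr (abs_le.mp hdb),
    mem_coeff 2 a2 x₂ y₂ m2 n2 hm2 hn2 hmx2 hny2 h2,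
    mem_coeff 3 a3 x₃ y₃ m3 n3 hm3 hn3 hmx3 hny3 h3,
    mem_coeff 5 a5 x₅ y₅ m5 n5 hm5 hn5 hmx5 hny5 h5,
    mem_coeff 7 a7 x₇ y₇ m7 n7 hm7 hn7 hmx7 hny7 h7,
    mem_coeff 11 a11 x₁₁ y₁₁ m11 n11 hm11 hn11 hmx11 hny11 h11,
    mem_coeff 13 a13 x₁₃ y₁₃ m13 n13 hm13 hn13 hmx13 hny13 h13⟩
end
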